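/- arXiv:1208.6140 — 2 statements merged into one kernel-verified Lean document; each statement's English description precedes it below -/
import Mathlib

section
/- Let H be a real inner product space, A : H → H a linear map, and let δ > 0, τ > 0 and σ ≥ 1/2 be real numbers. Assume that ⟪A u, u⟫ ≥ -δ‖u‖² for all u ∈ H (i.e. the operator A + δ·id is nonnegative). If y, y₁ ∈ H satisfy the one-step scheme (exp(-δτ)·y₁ - y)/τ + (A + δ·id)(σ·exp(-δτ)·y₁ + (1-σ)·y) = 0, then ‖y₁‖ ≤ exp(δτ)·‖y‖. -/
open scoped RealInnerProductSpace

/-!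
Substituting `v = exp(-δτ)·y₁` turns the scheme into the weighted two-level scheme
`(v - y)/τ + B(σv + (1-σ)y) = 0` with the nonnegative operator `B = A + δ·id`.
Pairing it with `w = σv + (1-σ)y` gives `⟪v - y, w⟫ ≤ 0`, and
`⟪v - y, w⟫ = (‖v‖² - ‖y‖²)/2 + (σ - 1/2)‖v - y‖²`, so `σ ≥ 1/2` forces `‖v‖ ≤ ‖y‖`.
-/

section WeightedScheme

variable {H : Type*} [NormedAddCommGroup H] [InnerProductSpace ℝ H]

theorem inner_sub_smul_add_one_sub_smul (v y : H) (σ : ℝ) :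
    ⟪v - y, σ • v + (1 - σ) • y⟫ = (‖v‖ ^ 2 - ‖y‖ ^ 2) / 2 + (σ - 1 / 2) * ‖v - y‖ ^ 2 := by
  rw [norm_sub_sq_real, ← real_inner_self_eq_norm_sq, ← real_inner_self_eq_norm_sq]
  simp only [inner_sub_left, inner_add_right, real_inner_smul_right, real_inner_comm y v]
  ring

theorem norm_le_of_inner_sub_weighted_nonpos {v y : H} {σ : ℝ} (hσ : 1 / 2 ≤ σ)
    (h : ⟪v - y, σ • v + (1 - σ) • y⟫ ≤ 0) : ‖v‖ ≤ ‖y‖ := by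
  rw [inner_sub_smul_add_one_sub_smul] at h
  have hsq : ‖v‖ ^ 2 ≤ ‖y‖ ^ 2 := by nlinarith [sq_nonneg ‖v - y‖]
  exact (pow_le_pow_iff_left₀ (norm_nonneg v) (norm_nonneg y) two_ne_zero).mp hsq

theorem norm_le_of_weighted_scheme (B : H →ₗ[ℝ] H) (hB : ∀ u, 0 ≤ ⟪B u, u⟫) {τ σ : ℝ}
    (hτ : 0 < τ) (hσ : 1 / 2 ≤ σ) {v y : H}
    (hscheme : (1 / τ) • (v - y) + B (σ • v + (1 - σ) • y) = 0) : ‖v‖ ≤ ‖y‖ := by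
  set w := σ • v + (1 - σ) • y
  have hpair : (1 / τ) * ⟪v - y, w⟫ + ⟪B w, w⟫ = 0 := by
    simpa only [inner_add_left, real_inner_smul_left, inner_zero_left] using
      congrArg (⟪·, w⟫) hscheme
  have hinv : 0 < 1 / τ := one_div_pos.mpr hτ
  refine norm_le_of_inner_sub_weighted_nonpos hσ ?_
  nlinarith [hB w]

end WeightedScheme

theorem stmt_0_general {H : Type*} [NormedAddCommGroup H] [InnerProductSpace ℝ H]
    (A : H →ₗ[ℝ] H) (δ τ σ : ℝ) (hτ : 0 < τ) (hσ : 1 / 2 ≤ σ)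
    (hA : ∀ u : H, ⟪A u, u⟫ ≥ -δ * ‖u‖ ^ 2)
    (y y₁ : H)
    (hscheme :
      (1 / τ) • (Real.exp (-δ * τ) • y₁ - y) +
        (A (σ • Real.exp (-δ * τ) • y₁ + (1 - σ) • y) +
          δ • (σ • Real.exp (-δ * τ) • y₁ + (1 - σ) • y)) = 0) :
    ‖y₁‖ ≤ Real.exp (δ * τ) * ‖y‖ := by
  have hB : ∀ u, 0 ≤ ⟪(A + δ • LinearMap.id : H →ₗ[ℝ] H) u, u⟫ := fun u => by
    simp only [LinearMap.add_apply, LinearMap.smul_apply, LinearMap.id_apply, inner_add_left,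
      real_inner_smul_left, real_inner_self_eq_norm_sq]
    linarith [hA u]
  have hv := norm_le_of_weighted_scheme _ hB hτ hσ hscheme
  rw [norm_smul, Real.norm_of_nonneg (Real.exp_pos _).le, neg_mul, Real.exp_neg,
    inv_mul_le_iff₀ (Real.exp_pos _)] at hv
  exact hv

/-- Theorem 1 of the paper (one step): the scheme
`(exp(-δτ)·y₁ - y)/τ + (A + δ·id)(σ·exp(-δτ)·y₁ + (1-σ)·y) = 0`
with `σ ≥ 1/2` and `A ≥ -δE` is ρ-stable with `ρ = exp(δτ)`. -/
theorem stmt_0 {H : Type*} [NormedAddCommGroup H] [InnerProductSpace ℝ H]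
    (A : H →ₗ[ℝ] H) (δ τ σ : ℝ) (hδ : 0 < δ) (hτ : 0 < τ) (hσ : 1 / 2 ≤ σ)
    (hA : ∀ u : H, ⟪A u, u⟫ ≥ -δ * ‖u‖ ^ 2)
    (y y₁ : H)
    (hscheme :
      (1 / τ) • (Real.exp (-δ * τ) • y₁ - y) +
        (A (σ • Real.exp (-δ * τ) • y₁ + (1 - σ) • y) +
          δ • (σ • Real.exp (-δ * τ) • y₁ + (1 - σ) • y)) = 0) :
    ‖y₁‖ ≤ Real.exp (δ * τ) * ‖y‖ :=
  stmt_0_general A δ τ σ hτ hσ hA y y₁ hscheme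
end

section
/- Let H be a real inner product space and let C₀, D, R₊, R₋ : H → H be linear maps such that: ⟪C₀ u, u⟫ = 0 for all u (C₀ is skew), ⟪D u, u⟫ ≥ 0 for all u, 0 ≤ ⟪R₊ u, u⟫ for all u, and R₋ is self-adjoint with -δ‖u‖² ≤ ⟪R₋ u, u⟫ ≤ 0 for all u, where δ > 0, and ‖R₋ u‖ ≤ δ‖u‖ for all u. Let τ > 0. If y, y₁ ∈ H satisfy the explicit-implicit scheme (y₁ - y)/τ + (C₀ + D + R₊) y₁ + R₋ y = 0, then ‖y₁‖ ≤ (1 + δτ)·‖y‖. -/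
open scoped RealInnerProductSpace

/-!
Pairing the scheme with `y₁` kills the skew part `C₀` and makes the implicit part contribute
`τ ⟪(C₀ + D + R₊) y₁, y₁⟫ ≥ 0`, so `‖y₁‖² ≤ ⟪y - τ R₋ y, y₁⟫`. Hence `‖y₁‖ ≤ ‖y - τ R₋ y‖`,
and the explicit part costs at most the factor `1 + δτ`.
-/

section

variable {H : Type*} [NormedAddCommGroup H] [InnerProductSpace ℝ H]

theorem norm_le_of_sq_le_inner {v w : H} (h : ‖v‖ ^ 2 ≤ ⟪w, v⟫) : ‖v‖ ≤ ‖w‖ := by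
  have hcs : ‖v‖ * ‖v‖ ≤ ‖w‖ * ‖v‖ := by
    nlinarith [real_inner_le_norm w v]
  rcases (norm_nonneg v).eq_or_lt with hv | hv
  · rw [← hv]
    exact norm_nonneg w
  · exact le_of_mul_le_mul_right hcs hv

theorem norm_le_norm_add_smul_of_inner_nonneg {u v : H} {τ : ℝ} (hτ : 0 ≤ τ)
    (hu : 0 ≤ ⟪u, v⟫) : ‖v‖ ≤ ‖v + τ • u‖ := by
  apply norm_le_of_sq_le_inner
  rw [inner_add_left, real_inner_smul_left, real_inner_self_eq_norm_sq]
  nlinarith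

theorem norm_sub_smul_le_of_norm_le {B : H → H} {δ τ : ℝ} (hτ : 0 ≤ τ)
    (hB : ∀ u, ‖B u‖ ≤ δ * ‖u‖) (y : H) : ‖y - τ • B y‖ ≤ (1 + δ * τ) * ‖y‖ :=
  calc ‖y - τ • B y‖ ≤ ‖y‖ + τ * ‖B y‖ := by
        simpa [norm_smul, abs_of_nonneg hτ] using norm_sub_le y (τ • B y)
    _ ≤ ‖y‖ + τ * (δ * ‖y‖) := by gcongr; exact hB y
    _ = (1 + δ * τ) * ‖y‖ := by ring

end

theorem stmt_6_general {H : Type*} [NormedAddCommGroup H] [InnerProductSpace ℝ H]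
    (C₀ D Rp Rm : H →ₗ[ℝ] H) (δ τ : ℝ) (hτ : 0 < τ)
    (hC₀ : ∀ u : H, ⟪C₀ u, u⟫ = 0)
    (hD : ∀ u : H, 0 ≤ ⟪D u, u⟫)
    (hRp : ∀ u : H, 0 ≤ ⟪Rp u, u⟫)
    (hRmNorm : ∀ u : H, ‖Rm u‖ ≤ δ * ‖u‖)
    (y y₁ : H)
    (hscheme : (1 / τ) • (y₁ - y) + (C₀ y₁ + D y₁ + Rp y₁) + Rm y = 0) :
    ‖y₁‖ ≤ (1 + δ * τ) * ‖y‖ := by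
  have himplicit : 0 ≤ ⟪C₀ y₁ + D y₁ + Rp y₁, y₁⟫ := by
    rw [inner_add_left, inner_add_left, hC₀]
    linarith [hD y₁, hRp y₁]
  have hstep : y₁ + τ • (C₀ y₁ + D y₁ + Rp y₁) = y - τ • Rm y := by
    have hscaled := congrArg (τ • ·) hscheme
    simp only [smul_add, smul_smul, mul_one_div_cancel hτ.ne', one_smul, smul_zero] at hscaled
    linear_combination (norm := module) hscaled
  calc ‖y₁‖ ≤ ‖y₁ + τ • (C₀ y₁ + D y₁ + Rp y₁)‖ :=
        norm_le_norm_add_smul_of_inner_nonneg hτ.le himplicit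
    _ = ‖y - τ • Rm y‖ := by rw [hstep]
    _ ≤ (1 + δ * τ) * ‖y‖ := norm_sub_smul_le_of_norm_le hτ.le hRmNorm y

/-- Theorem 2 of the paper (one step): the explicit-implicit scheme
`(y₁ - y)/τ + (C₀ + D + R₊) y₁ + R₋ y = 0` is unconditionally ρ-stable
with `ρ = 1 + δτ`. -/
theorem stmt_6 {H : Type*} [NormedAddCommGroup H] [InnerProductSpace ℝ H]
    (C₀ D Rp Rm : H →ₗ[ℝ] H) (δ τ : ℝ) (hδ : 0 < δ) (hτ : 0 < τ)
    (hC₀ : ∀ u : H, ⟪C₀ u, u⟫ = 0)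
    (hD : ∀ u : H, 0 ≤ ⟪D u, u⟫)
    (hRp : ∀ u : H, 0 ≤ ⟪Rp u, u⟫)
    (hRmSelfAdj : ∀ u w : H, ⟪Rm u, w⟫ = ⟪u, Rm w⟫)
    (hRmLower : ∀ u : H, -δ * ‖u‖ ^ 2 ≤ ⟪Rm u, u⟫)
    (hRmUpper : ∀ u : H, ⟪Rm u, u⟫ ≤ 0)
    (hRmNorm : ∀ u : H, ‖Rm u‖ ≤ δ * ‖u‖)
    (y y₁ : H)
    (hscheme : (1 / τ) • (y₁ - y) + (C₀ y₁ + D y₁ + Rp y₁) + Rm y = 0) :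
    ‖y₁‖ ≤ (1 + δ * τ) * ‖y‖ :=
  stmt_6_general C₀ D Rp Rm δ τ hτ hC₀ hD hRp hRmNorm y y₁ hscheme
end
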